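/- ∫_{−1}^∞ dx/√(x³+1) = B(1/2, 1/3), where B is the Beta function. -/

import Mathlib

/-!
The substitution `u = x ^ 3 + 1` turns three times the integral into
`∫₀^∞ u^(-1/2) |u - 1|^(-2/3) du`. On `(0, 1)` this is `B(1/2, 1/3)`; on `(1, ∞)` the substitution
`u = 1/v` turns it into `B(1/6, 1/3)`, and the reflection formula `Γ(1/6) Γ(5/6) = 2π = 2 Γ(1/2)²`
gives `B(1/6, 1/3) = 2 B(1/2, 1/3)`.
-/

open MeasureTheory Set Filter Real ProbabilityTheory

lemma ofReal_cpow_mul_one_sub_cpow {a b t : ℝ} (ht : t ∈ Ioo (0 : ℝ) 1) :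
    ((t ^ (a - 1) * (1 - t) ^ (b - 1) : ℝ) : ℂ) =
      (t : ℂ) ^ ((a : ℂ) - 1) * (1 - (t : ℂ)) ^ ((b : ℂ) - 1) := by
  rw [Complex.ofReal_mul, Complex.ofReal_cpow ht.1.le, Complex.ofReal_cpow (sub_nonneg.2 ht.2.le)]
  push_cast
  ring

lemma integrableOn_rpow_mul_one_sub_rpow {a b : ℝ} (ha : 0 < a) (hb : 0 < b) :
    IntegrableOn (fun t : ℝ => t ^ (a - 1) * (1 - t) ^ (b - 1)) (Ioo 0 1) := by
  have h := (Complex.betaIntegral_convergent (u := a) (v := b) (by simpa using ha)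
    (by simpa using hb)).1.mono_set Ioo_subset_Ioc_self
  refine IntegrableOn.congr_fun h.norm (fun t ht => ?_) measurableSet_Ioo
  rw [← ofReal_cpow_mul_one_sub_cpow ht, Complex.norm_real, norm_of_nonneg
    (mul_nonneg (rpow_nonneg ht.1.le _) (rpow_nonneg (sub_nonneg.2 ht.2.le) _))]

lemma integral_rpow_mul_one_sub_rpow {a b : ℝ} (ha : 0 < a) (hb : 0 < b) :
    ∫ t in Ioo (0 : ℝ) 1, t ^ (a - 1) * (1 - t) ^ (b - 1) = beta a b := by
  have h : ((∫ t in Ioo (0 : ℝ) 1, t ^ (a - 1) * (1 - t) ^ (b - 1) : ℝ) : ℂ) =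
      Complex.betaIntegral a b := by
    rw [Complex.betaIntegral, intervalIntegral.integral_of_le zero_le_one,
      integral_Ioc_eq_integral_Ioo,
      ← setIntegral_congr_fun measurableSet_Ioo fun t ht => ofReal_cpow_mul_one_sub_cpow ht]
    exact integral_ofReal.symm
  rw [beta_eq_betaIntegralReal a b ha hb, ← h, Complex.ofReal_re]

lemma image_inv_Ioo_zero_one : (fun v : ℝ => v⁻¹) '' Ioo 0 1 = Ioi 1 := by
  ext u
  constructor
  · rintro ⟨v, ⟨hv0, hv1⟩, rfl⟩
    exact one_lt_inv_iff₀.2 ⟨hv0, hv1⟩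
  · intro hu
    exact ⟨u⁻¹, ⟨inv_pos.2 (zero_lt_one.trans hu), inv_lt_one_of_one_lt₀ hu⟩, inv_inv u⟩

lemma abs_deriv_inv_mul_rpow_neg_mul_inv_sub_one_rpow {b c v : ℝ} (hv : v ∈ Ioo (0 : ℝ) 1) :
    |-(v ^ 2)⁻¹| * ((v⁻¹) ^ (-c) * (v⁻¹ - 1) ^ (b - 1)) = v ^ (c - b - 1) * (1 - v) ^ (b - 1) := by
  obtain ⟨hv0, hv1⟩ := hv
  have hsub : v⁻¹ - 1 = (1 - v) * v⁻¹ := by field_simp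
  rw [abs_neg, abs_of_pos (by positivity), hsub, mul_rpow (sub_nonneg.2 hv1.le) (by positivity),
    inv_rpow hv0.le, inv_rpow hv0.le, ← rpow_neg hv0.le, ← rpow_neg hv0.le, neg_neg,
    ← rpow_natCast, ← rpow_neg hv0.le]
  calc v ^ (-((2 : ℕ) : ℝ)) * (v ^ c * ((1 - v) ^ (b - 1) * v ^ (-(b - 1))))
      = v ^ (-((2 : ℕ) : ℝ) + c + -(b - 1)) * (1 - v) ^ (b - 1) := by
        rw [rpow_add hv0, rpow_add hv0]; ring
    _ = v ^ (c - b - 1) * (1 - v) ^ (b - 1) := by push_cast; ring_nf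

lemma integrableOn_Ioi_one_rpow_neg_mul_sub_one_rpow_iff {b c : ℝ} :
    IntegrableOn (fun u : ℝ => u ^ (-c) * (u - 1) ^ (b - 1)) (Ioi 1) ↔
      IntegrableOn (fun v : ℝ => v ^ (c - b - 1) * (1 - v) ^ (b - 1)) (Ioo 0 1) := by
  rw [← image_inv_Ioo_zero_one,
    integrableOn_image_iff_integrableOn_abs_deriv_smul measurableSet_Ioo
      (fun v hv => (hasDerivAt_inv hv.1.ne').hasDerivWithinAt) inv_injective.injOn]
  exact integrableOn_congr_fun (fun v hv => abs_deriv_inv_mul_rpow_neg_mul_inv_sub_one_rpow hv)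
    measurableSet_Ioo

lemma integral_Ioi_one_rpow_neg_mul_sub_one_rpow {b c : ℝ} :
    ∫ u in Ioi (1 : ℝ), u ^ (-c) * (u - 1) ^ (b - 1) =
      ∫ v in Ioo (0 : ℝ) 1, v ^ (c - b - 1) * (1 - v) ^ (b - 1) := by
  rw [← image_inv_Ioo_zero_one, integral_image_eq_integral_abs_deriv_smul measurableSet_Ioo
    (fun v hv => (hasDerivAt_inv hv.1.ne').hasDerivWithinAt) inv_injective.injOn]
  exact setIntegral_congr_fun measurableSet_Ioo
    fun v hv => abs_deriv_inv_mul_rpow_neg_mul_inv_sub_one_rpow hv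

lemma integral_Ioi_zero_rpow_neg_mul_abs_sub_one_rpow {b c : ℝ} (hb : 0 < b) (hbc : b < c)
    (hc : c < 1) :
    ∫ u in Ioi (0 : ℝ), u ^ (-c) * |u - 1| ^ (b - 1) = beta (1 - c) b + beta (c - b) b := by
  have hIoo : EqOn (fun u : ℝ => u ^ (-c) * |u - 1| ^ (b - 1))
      (fun t => t ^ (1 - c - 1) * (1 - t) ^ (b - 1)) (Ioo 0 1) := fun u hu => by
    simp only [abs_sub_comm u, abs_of_pos (sub_pos.2 hu.2), sub_sub_cancel_left]
  have hIoi : EqOn (fun u : ℝ => u ^ (-c) * |u - 1| ^ (b - 1))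
      (fun u => u ^ (-c) * (u - 1) ^ (b - 1)) (Ici 1) := fun u hu => by
    simp only [abs_of_nonneg (sub_nonneg.2 (mem_Ici.1 hu))]
  have hint_Ioo := (integrableOn_rpow_mul_one_sub_rpow (sub_pos.2 hc) hb).congr_fun hIoo.symm
    measurableSet_Ioo
  have hint_Ici : IntegrableOn (fun u : ℝ => u ^ (-c) * |u - 1| ^ (b - 1)) (Ici 1) := by
    refine IntegrableOn.congr_fun ?_ hIoi.symm measurableSet_Ici
    exact (integrableOn_Ici_iff_integrableOn_Ioi).2 <|
      integrableOn_Ioi_one_rpow_neg_mul_sub_one_rpow_iff.2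
        (integrableOn_rpow_mul_one_sub_rpow (sub_pos.2 hbc) hb)
  rw [← Ioo_union_Ici_eq_Ioi zero_lt_one,
    setIntegral_union ((Iio_disjoint_Ici le_rfl).mono_left Ioo_subset_Iio_self) measurableSet_Ici
      hint_Ioo hint_Ici, setIntegral_congr_fun measurableSet_Ioo hIoo,
    setIntegral_congr_fun measurableSet_Ici hIoi, integral_Ici_eq_integral_Ioi,
    integral_Ioi_one_rpow_neg_mul_sub_one_rpow, integral_rpow_mul_one_sub_rpow (sub_pos.2 hc) hb,
    integral_rpow_mul_one_sub_rpow (sub_pos.2 hbc) hb]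

lemma beta_one_sixth_one_third : beta (1 / 6) (1 / 3) = 2 * beta (1 / 2) (1 / 3) := by
  have hreflect : Gamma (1 / 6) * Gamma (5 / 6) = 2 * π := by
    rw [show (5 / 6 : ℝ) = 1 - 1 / 6 by norm_num, Gamma_mul_Gamma_one_sub,
      show π * (1 / 6) = π / 6 by ring, sin_pi_div_six]
    field_simp
  have hhalf : Gamma (1 / 2) ^ 2 = π := by
    rw [Gamma_one_half_eq, sq_sqrt pi_pos.le]
  rw [beta, beta, show (1 / 6 + 1 / 3 : ℝ) = 1 / 2 by norm_num,
    show (1 / 2 + 1 / 3 : ℝ) = 5 / 6 by norm_num]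
  field_simp
  rw [hreflect, hhalf]

lemma image_cube_add_one_Ioi : (fun x : ℝ => x ^ 3 + 1) '' Ioi (-1) = Ioi 0 := by
  have hmono : StrictMono (fun x : ℝ => x ^ 3) := Odd.strictMono_pow (by decide : Odd 3)
  have hbot : Tendsto (fun x : ℝ => x ^ 3) atBot atBot := by
    have h : Tendsto (fun x : ℝ => -(-x) ^ 3) atBot atBot := tendsto_neg_atTop_atBot.comp
      ((tendsto_pow_atTop three_ne_zero).comp tendsto_neg_atBot_atTop)
    simpa [Odd.neg_pow (by decide : Odd 3)] using h
  have hsurj : Function.Surjective (fun x : ℝ => x ^ 3) :=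
    (continuous_pow 3).surjective (tendsto_pow_atTop three_ne_zero) hbot
  have hcube_gt {x : ℝ} : -1 < x ↔ 0 < x ^ 3 + 1 := by
    rw [← hmono.lt_iff_lt]
    constructor <;> intro h <;> norm_num at * <;> linarith
  ext u
  constructor
  · rintro ⟨x, hx, rfl⟩
    exact hcube_gt.1 hx
  · intro hu
    obtain ⟨x, hx⟩ := hsurj (u - 1)
    have hx' : x ^ 3 + 1 = u := by simp only at hx; rw [hx]; ring
    exact ⟨x, hcube_gt.2 (hx'.symm ▸ hu), hx'⟩

lemma abs_deriv_cube_add_one_mul_rpow {x : ℝ} (hx : -1 < x) (hx0 : x ≠ 0) :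
    |3 * x ^ 2| * ((x ^ 3 + 1) ^ (-(1 / 2) : ℝ) * |x ^ 3 + 1 - 1| ^ (1 / 3 - 1 : ℝ)) =
      3 * (1 / √(x ^ 3 + 1)) := by
  have hpos : 0 < x ^ 3 + 1 := by nlinarith [sq_nonneg x, sq_nonneg (x - 1)]
  have hcube : |x ^ 3 + 1 - 1| ^ (1 / 3 - 1 : ℝ) = (x ^ 2)⁻¹ := by
    rw [add_sub_cancel_right, abs_pow, ← rpow_natCast, ← rpow_mul (abs_nonneg x),
      show ((3 : ℕ) : ℝ) * (1 / 3 - 1) = -(2 : ℕ) by norm_num, rpow_neg (abs_nonneg x),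
      rpow_natCast, sq_abs]
  rw [hcube, rpow_neg hpos.le, ← sqrt_eq_rpow, abs_of_nonneg (by positivity)]
  field_simp

theorem stmt3 :
    (∫ x in Ioi (-1 : ℝ), 1 / Real.sqrt (x ^ 3 + 1))
      = Real.Gamma (1 / 2) * Real.Gamma (1 / 3) / Real.Gamma (1 / 2 + 1 / 3) := by
  set g : ℝ → ℝ := fun u => u ^ (-(1 / 2) : ℝ) * |u - 1| ^ (1 / 3 - 1 : ℝ)
  have hsubst : ∫ u in Ioi (0 : ℝ), g u = 3 * ∫ x in Ioi (-1 : ℝ), 1 / √(x ^ 3 + 1) := by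
    rw [← image_cube_add_one_Ioi, integral_image_eq_integral_abs_deriv_smul measurableSet_Ioi
      (fun x _ => ((hasDerivAt_pow 3 x).add_const 1).hasDerivWithinAt)
      ((Odd.strictMono_pow (R := ℝ) (by decide : Odd 3)).add_const 1).injective.injOn,
      ← integral_const_mul]
    refine setIntegral_congr_ae measurableSet_Ioi ?_
    filter_upwards [compl_mem_ae_iff.2 (measure_singleton (0 : ℝ))] with x hx0 hx
    exact abs_deriv_cube_add_one_mul_rpow hx hx0
  have hsplit : ∫ u in Ioi (0 : ℝ), g u = beta (1 / 2) (1 / 3) + beta (1 / 6) (1 / 3) := by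
    convert integral_Ioi_zero_rpow_neg_mul_abs_sub_one_rpow (b := 1 / 3) (c := 1 / 2)
      (by norm_num) (by norm_num) (by norm_num) using 2 <;> norm_num
  rw [hsplit, beta_one_sixth_one_third] at hsubst
  change _ = beta (1 / 2) (1 / 3)
  linarith
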